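/- arXiv:0706.0195 — 2 statements merged into one kernel-verified Lean document; each statement's English description precedes it below -/
import Mathlib

section
/- Let A = {0,1}, ρ_0 = {(0,0),(0,1),(1,0)}, and R_0 the clone of Boolean functions preserving ρ_0. With f_n the n-ary parity function, f_m ≤_{R_0} f_n if and only if m ≤ n; hence ≡_{R_0} has infinitely many classes. -/
/-!
A `ρ₀`-preserving operation cannot take the value `1` on two disjoint arguments, in particular
on two distinct unit vectors. If `f_m = f_n ∘ h` with `h` in `R₀`, every unit vector `e_j` of
arity `m + 1` has parity `1`, so some `h_k` sends it to `1`; choosing such a `k` for each `j`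
is therefore injective, whence `m ≤ n`. Conversely, for `m ≤ n` we have
`f_m(x) = f_n(x, 0, …, 0)`, and projections and the constant `0` lie in `R₀`. The parities thus form an infinite
chain of pairwise inequivalent operations.
-/

/-- An `n`-indexed operation on `A` has arity `n + 1` (so arities are ≥ 1). -/
abbrev Op (A : Type) (n : ℕ) := (Fin (n + 1) → A) → A

/-- A clone on `A`: a set of finitary operations containing all projections
and closed under composition. -/
structure Clone (A : Type) where
  ops : ∀ n : ℕ, Set (Op A n)
  proj_mem : ∀ (n : ℕ) (i : Fin (n + 1)), (fun x => x i) ∈ ops n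
  comp_mem : ∀ {m n : ℕ} (g : Op A m) (h : Fin (m + 1) → Op A n),
      g ∈ ops m → (∀ i, h i ∈ ops n) → (fun x => g fun i => h i x) ∈ ops n

/-- The set `O_A` of all finitary operations on `A`, of all arities. -/
def Ops (A : Type) := Σ n : ℕ, Op A n

/-- `Minor C f g` : `f` is a `C`-minor of `g`, i.e. `f = g ∘ h` for a tuple `h`
of operations from `C`. -/
def Minor {A : Type} (C : Clone A) (f g : Ops A) : Prop :=
  ∃ h : Fin (g.1 + 1) → Op A f.1,
    (∀ i, h i ∈ C.ops f.1) ∧ f.2 = fun x => g.2 fun i => h i x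

/-- `C`-equivalence: each of `f`, `g` is a `C`-minor of the other. -/
def CEquiv {A : Type} (C : Clone A) (f g : Ops A) : Prop :=
  Minor C f g ∧ Minor C g f

/-- The parity (sum mod 2) function of arity `n + 1` on `Fin 2`. -/
def parity (n : ℕ) : Op (Fin 2) n := fun x => ∑ i, x i

open Function

theorem Minor.refl {A : Type} (C : Clone A) (f : Ops A) : Minor C f f :=
  ⟨fun i x => x i, C.proj_mem _, rfl⟩

theorem Minor.trans {A : Type} {C : Clone A} {f g k : Ops A}
    (hfg : Minor C f g) (hgk : Minor C g k) : Minor C f k := by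
  obtain ⟨h, hmem, hf⟩ := hfg
  obtain ⟨h', hmem', hg⟩ := hgk
  refine ⟨fun j x => h' j fun i => h i x, fun j => C.comp_mem _ _ (hmem' j) hmem, ?_⟩
  rw [hf, hg]

theorem CEquiv.equivalence {A : Type} (C : Clone A) : Equivalence (CEquiv C) where
  refl f := ⟨Minor.refl C f, Minor.refl C f⟩
  symm h := ⟨h.2, h.1⟩
  trans h₁ h₂ := ⟨h₁.1.trans h₂.1, h₂.2.trans h₁.2⟩

theorem infinite_quot_cequiv_of_minor_iff_le {A : Type} {C : Clone A} (F : ℕ → Ops A)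
    (hF : ∀ m n, Minor C (F m) (F n) ↔ m ≤ n) : Infinite (Quot (CEquiv C)) := by
  refine Infinite.of_injective (fun n => Quot.mk _ (F n)) fun m n hmn => ?_
  have hequiv := (CEquiv.equivalence C).eqvGen_iff.mp (Quot.eqvGen_exact hmn)
  exact le_antisymm ((hF m n).1 hequiv.1) ((hF n m).1 hequiv.2)

/-- `ρ₀ = {(0,0), (0,1), (1,0)}` consists of the pairs that are not both `1`. -/
def PreservesRho0 {ι : Type*} (f : (ι → Fin 2) → Fin 2) : Prop :=
  ∀ a b : ι → Fin 2, (∀ i, ¬(a i = 1 ∧ b i = 1)) → ¬(f a = 1 ∧ f b = 1)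

section PreservesRho0

variable {ι κ : Type*}

theorem preservesRho0_apply (i : ι) : PreservesRho0 fun x : ι → Fin 2 => x i :=
  fun _ _ hab => hab i

theorem preservesRho0_const_zero : PreservesRho0 fun _ : ι → Fin 2 => (0 : Fin 2) :=
  fun _ _ _ h => zero_ne_one h.1

theorem preservesRho0_extend_zero {e : ι → κ} (he : Injective e) (k : κ) :
    PreservesRho0 fun x : ι → Fin 2 => extend e x 0 k := by
  by_cases hk : ∃ i, e i = k
  · obtain ⟨i, rfl⟩ := hk
    simpa only [he.extend_apply] using preservesRho0_apply i
  · simpa only [extend_apply' _ _ _ hk, Pi.zero_apply] using preservesRho0_const_zero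

theorem PreservesRho0.eq_of_apply_single_eq_one [DecidableEq ι] {f : (ι → Fin 2) → Fin 2}
    (hf : PreservesRho0 f) {i j : ι} (hi : f (Pi.single i 1) = 1)
    (hj : f (Pi.single j 1) = 1) : i = j := by
  by_contra hij
  refine hf _ _ (fun k hk => hij ?_) ⟨hi, hj⟩
  have mem_support : ∀ l, (Pi.single l 1 : ι → Fin 2) k = 1 → k = l := fun l hl =>
    by_contra fun hkl => zero_ne_one ((Pi.single_eq_of_ne hkl 1).symm.trans hl)
  exact (mem_support i hk.1).symm.trans (mem_support j hk.2)

end PreservesRho0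

theorem exists_eq_one_of_sum_eq_one {ι : Type*} [Fintype ι] {x : ι → Fin 2}
    (hx : ∑ i, x i = 1) : ∃ i, x i = 1 := by
  obtain ⟨i, -, hi⟩ := Finset.exists_ne_zero_of_sum_ne_zero (hx ▸ one_ne_zero)
  exact ⟨i, Fin.eq_one_of_ne_zero _ hi⟩

theorem card_le_of_sum_eq_sum_of_preservesRho0 {ι κ : Type*} [Fintype ι] [Fintype κ]
    [DecidableEq ι] (h : κ → (ι → Fin 2) → Fin 2) (hh : ∀ k, PreservesRho0 (h k))
    (hsum : ∀ x, ∑ i, x i = ∑ k, h k x) : Fintype.card ι ≤ Fintype.card κ := by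
  have hit : ∀ i, ∃ k, h k (Pi.single i 1) = 1 := fun i =>
    exists_eq_one_of_sum_eq_one ((hsum _).symm.trans (Fintype.sum_pi_single' i 1))
  choose φ hφ using hit
  exact Fintype.card_le_of_injective φ fun i j hij =>
    (hh (φ i)).eq_of_apply_single_eq_one (hφ i) (hij ▸ hφ j)

theorem sum_eq_sum_extend_zero {ι κ : Type*} [Fintype ι] [Fintype κ] {e : ι → κ}
    (he : Injective e) (x : ι → Fin 2) : ∑ i, x i = ∑ k, extend e x 0 k :=
  Fintype.sum_of_injective e he _ _ (fun _ hk => extend_apply' _ _ _ hk)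
    (fun i => (he.extend_apply _ _ i).symm)

theorem minor_parity_iff {R0 : Clone (Fin 2)}
    (hR : ∀ n, R0.ops n = {f : Op (Fin 2) n | PreservesRho0 f}) (m n : ℕ) :
    Minor R0 ⟨m, parity m⟩ ⟨n, parity n⟩ ↔ m ≤ n := by
  constructor
  · rintro ⟨h, hmem, hf⟩
    have hh : ∀ k, PreservesRho0 (h k) := fun k => by
      have hk := hmem k
      rwa [hR] at hk
    simpa only [Fintype.card_fin, Nat.add_le_add_iff_right] using card_le_of_sum_eq_sum_of_preservesRho0 h hh (congrFun hf)
  · intro hmn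
    have he : Injective (Fin.castLE (Nat.succ_le_succ hmn)) := Fin.castLE_injective _
    refine ⟨fun k x => extend (Fin.castLE _) x 0 k, fun k => ?_,
      funext (sum_eq_sum_extend_zero he)⟩
    rw [hR]
    exact preservesRho0_extend_zero he k

theorem rho0_clone_parity {R0 : Clone (Fin 2)}
    (hR : ∀ n, R0.ops n = {f : Op (Fin 2) n |
      ∀ a b : Fin (n + 1) → Fin 2,
        (∀ i, ¬(a i = 1 ∧ b i = 1)) → ¬(f a = 1 ∧ f b = 1)}) :
    (∀ m n : ℕ, Minor R0 ⟨m, parity m⟩ ⟨n, parity n⟩ ↔ m ≤ n) ∧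
    Infinite (Quot (CEquiv R0)) :=
  ⟨minor_parity_iff hR,
    infinite_quot_cequiv_of_minor_iff_le (fun n => ⟨n, parity n⟩) (minor_parity_iff hR)⟩
end

section
/- Let T_0 be the clone of Boolean functions f with f(0,...,0) = 0. For Boolean functions f, g: f ≤_{T_0} g if and only if f(0,...,0) = g(0,...,0) and Im(f) ⊆ Im(g). Consequently there are exactly 4 T_0-equivalence classes: the two constants, and the nonconstant functions with value 0 (respectively 1) at the all-zero tuple. -/
/-!
A `T₀`-minor `g ∘ h` has the value of `g` at the zero tuple and its image lies in `Im g`. Conversely,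
if `f 0 = g 0` and `Im f ⊆ Im g`, map every tuple `x` to a `g`-preimage of `f x`, choosing the
zero tuple for the zero tuple: the coordinates of this map lie in `T₀`, and composing with `g`
gives `f`. The same argument works for the clone of operations fixing any point `a`. Hence the
`T₀`-classes are classified by the pair `(f 0, Im f)`, and over `{0, 1}` the pairs with
`f 0 ∈ Im f` are the four `(0, {0})`, `(1, {1})`, `(0, {0, 1})`, `(1, {0, 1})`.
-/

section PointFixingClone

variable {A : Type} {C : Clone A} {a : A}

theorem minor_iff_of_ops_eq (hC : ∀ n, C.ops n = {f : Op A n | f (fun _ => a) = a})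
    (f g : Ops A) :
    Minor C f g ↔
      f.2 (fun _ => a) = g.2 (fun _ => a) ∧ Set.range f.2 ⊆ Set.range g.2 := by
  classical
  constructor
  · rintro ⟨h, hmem, hf⟩
    rw [hf]
    refine ⟨congrArg g.2 (funext fun i => ?_), Set.range_comp_subset_range _ g.2⟩
    simpa [hC] using hmem i
  · rintro ⟨h0, hrange⟩
    -- Send each `x` to a `g`-preimage of `f x`, and the constant tuple to itself, so that the
    -- coordinates of this map fix `a`.
    choose w hw using fun x => hrange ⟨x, rfl⟩
    let w' x := if x = (fun _ => a) then (fun _ => a) else w x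
    have hw' : ∀ x, g.2 (w' x) = f.2 x := by
      intro x
      by_cases hx : x = fun _ => a
      · simp only [w', hx, ↓reduceIte, h0]
      · simp only [w', if_neg hx, hw]
    refine ⟨fun i x => w' x i, fun i => by simp [hC, w'], funext fun x => (hw' x).symm⟩

theorem cequiv_iff_of_ops_eq (hC : ∀ n, C.ops n = {f : Op A n | f (fun _ => a) = a})
    (f g : Ops A) :
    CEquiv C f g ↔
      f.2 (fun _ => a) = g.2 (fun _ => a) ∧ Set.range f.2 = Set.range g.2 := by
  rw [CEquiv, minor_iff_of_ops_eq hC, minor_iff_of_ops_eq hC, Set.Subset.antisymm_iff]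
  exact ⟨fun ⟨⟨h0, hfg⟩, _, hgf⟩ => ⟨h0, hfg, hgf⟩, fun ⟨h0, hfg, hgf⟩ => ⟨⟨h0, hfg⟩, h0.symm, hgf⟩⟩

def Ops.signature [Fintype A] [DecidableEq A] (a : A) (f : Ops A) : A × Finset A :=
  (f.2 (fun _ => a), Finset.univ.image f.2)

theorem cequiv_iff_signature_eq [Fintype A] [DecidableEq A]
    (hC : ∀ n, C.ops n = {f : Op A n | f (fun _ => a) = a}) (f g : Ops A) :
    CEquiv C f g ↔ f.signature a = g.signature a := by
  rw [cequiv_iff_of_ops_eq hC, Ops.signature, Ops.signature, Prod.mk.injEq, ← Finset.coe_inj]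
  simp only [Finset.coe_image, Finset.coe_univ, Set.image_univ]

end PointFixingClone

theorem range_signature_fin_two :
    Set.range (Ops.signature (0 : Fin 2)) = {p | p.1 ∈ p.2} := by
  ext p
  constructor
  · rintro ⟨f, rfl⟩
    exact Finset.mem_image_of_mem f.2 (Finset.mem_univ _)
  · intro hp
    -- The image is `{p.1}` or `univ`; `x ↦ x 0 + p.1` realizes the latter.
    refine ⟨⟨0, fun x => if p.2 = {p.1} then p.1 else x 0 + p.1⟩, ?_⟩
    revert p
    decide

theorem T0_minor_description {T0 : Clone (Fin 2)}
    (hT : ∀ n, T0.ops n = {f : Op (Fin 2) n | f (fun _ => 0) = 0}) :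
    (∀ f g : Ops (Fin 2), Minor T0 f g ↔
      (f.2 (fun _ => 0) = g.2 (fun _ => 0) ∧ Set.range f.2 ⊆ Set.range g.2)) ∧
    Nat.card (Quot (CEquiv T0)) = 4 := by
  refine ⟨minor_iff_of_ops_eq hT, ?_⟩
  let q : Quot (CEquiv T0) → Fin 2 × Finset (Fin 2) :=
    Quot.lift (Ops.signature 0) fun f g => (cequiv_iff_signature_eq hT f g).mp
  have hq : Function.Injective q := by
    rintro ⟨f⟩ ⟨g⟩ h
    exact Quot.sound ((cequiv_iff_signature_eq hT f g).mpr h)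
  calc Nat.card (Quot (CEquiv T0))
      = Nat.card (Set.range q) := Nat.card_congr (Equiv.ofInjective q hq)
    _ = Nat.card {p : Fin 2 × Finset (Fin 2) | p.1 ∈ p.2} := by
      rw [Set.range_quot_lift, range_signature_fin_two]
    _ = 4 := by rw [Nat.card_eq_fintype_card]; rfl
end
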